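/- For natural numbers n ≥ 2 and j with 2j+1 ≤ n−1 and n ≥ 2j+3, the terminating sum ∑_{k=0}^{j} [(−n+1)_k (−j−1/2)_k (−j)_k] / [((−n+1)/2 − j)_k (1−j−n/2)_k · k!] = −(1−n)_{2j+1}/(n−1)_{2j+1} in ℚ, and consequently C(n+2j−1, 2j+1) · (−(1−n)_{2j+1}/(n−1)_{2j+1}) = C(n−1, 2j+1). -/

import Mathlib

/-- Rising factorial (Pochhammer symbol) on ℚ. -/
def poch (x : ℚ) : ℕ → ℚ
  | 0 => 1
  | k + 1 => poch x k * (x + k)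

/-!
The sum is a balanced terminating ₃F₂, so it is an instance of the Pfaff–Saalschütz identity; we
prove this instance directly, by induction on `j`. With `t j k` the `k`-th summand, the
Wilf–Zeilberger certificate `R j k = k (2k - 4j - 5) / ((j + 1)(2j + 3)) · t (j + 1) k` satisfies
`t (j + 1) k - ρ j · t j k = R j (k + 1) - R j k` with `ρ j = (n-2j-2)(n-2j-3) / ((n+2j)(n+2j+1))`,
so summing over `k` gives `∑ t (j + 1) = ρ j · ∑ t j`, and the right-hand side obeys the same
recurrence. The binomial identity follows by writing `(1 - n)_{2j+1}` and `(n - 1)_{2j+1}` as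
falling and rising factorials of `n - 1`.
-/

open Polynomial Nat Finset

lemma poch_eq_eval_ascPochhammer (x : ℚ) (k : ℕ) : poch x k = (ascPochhammer ℚ k).eval x := by
  induction k with
  | zero => simp [poch]
  | succ k ih => rw [poch, ih, ascPochhammer_succ_eval]

lemma poch_succ_eq_mul_poch_add_one (x : ℚ) (k : ℕ) : poch x (k + 1) = x * poch (x + 1) k := by
  simp [poch_eq_eval_ascPochhammer, ascPochhammer_succ_left, eval_comp]

lemma poch_add_one {x : ℚ} (hx : x ≠ 0) (k : ℕ) : poch (x + 1) k = poch x k * (x + k) / x := by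
  rw [eq_div_iff hx, mul_comm, ← poch_succ_eq_mul_poch_add_one, poch]

lemma poch_neg_natCast_of_lt {m k : ℕ} (h : m < k) : poch (-(m : ℚ)) k = 0 := by
  rw [poch_eq_eval_ascPochhammer, ascPochhammer_eval_neg_coe_nat_of_lt h]

lemma poch_neg_natCast (m k : ℕ) : poch (-(m : ℚ)) k = (-1) ^ k * m.descFactorial k := by
  rw [poch_eq_eval_ascPochhammer, ascPochhammer_eval_neg_eq_descPochhammer,
    descPochhammer_eval_eq_descFactorial]

lemma poch_natCast (m k : ℕ) : poch (m : ℚ) k = m.ascFactorial k := by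
  rw [poch_eq_eval_ascPochhammer, ascPochhammer_nat_eq_natCast_ascFactorial]

def hypergeomTerm (a₁ a₂ a₃ b₁ b₂ : ℚ) (k : ℕ) : ℚ :=
  poch a₁ k * poch a₂ k * poch a₃ k / (poch b₁ k * poch b₂ k * k !)

section hypergeomTerm

variable (a₁ a₂ a₃ b₁ b₂ : ℚ) (k : ℕ)

lemma hypergeomTerm_succ :
    hypergeomTerm a₁ a₂ a₃ b₁ b₂ (k + 1) = hypergeomTerm a₁ a₂ a₃ b₁ b₂ k *
      ((a₁ + k) * (a₂ + k) * (a₃ + k) / ((b₁ + k) * (b₂ + k) * (k + 1))) := by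
  simp only [hypergeomTerm, poch, factorial_succ, cast_mul, cast_succ, div_eq_mul_inv, mul_inv]
  ring

variable {a₂ a₃ b₁ b₂} in
lemma hypergeomTerm_add_one (ha₂ : a₂ ≠ 0) (ha₃ : a₃ ≠ 0) (hb₁ : b₁ ≠ 0) (hb₂ : b₂ ≠ 0) :
    hypergeomTerm a₁ (a₂ + 1) (a₃ + 1) (b₁ + 1) (b₂ + 1) k = hypergeomTerm a₁ a₂ a₃ b₁ b₂ k *
      ((a₂ + k) * (a₃ + k) * b₁ * b₂ / (a₂ * a₃ * (b₁ + k) * (b₂ + k))) := by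
  simp only [hypergeomTerm, poch_add_one ha₂, poch_add_one ha₃, poch_add_one hb₁,
    poch_add_one hb₂, div_eq_mul_inv, mul_inv, inv_inv]
  ring

lemma hypergeomTerm_neg_natCast_of_lt {m : ℕ} (h : m < k) :
    hypergeomTerm a₁ a₂ (-(m : ℚ)) b₁ b₂ k = 0 := by
  simp [hypergeomTerm, poch_neg_natCast_of_lt h]

end hypergeomTerm

def summand (n j k : ℕ) : ℚ :=
  hypergeomTerm (-(n : ℚ) + 1) (-(j : ℚ) - 1 / 2) (-(j : ℚ)) ((-(n : ℚ) + 1) / 2 - j)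
    (1 - j - (n : ℚ) / 2) k

def stepRatio (n j : ℕ) : ℚ :=
  ((n : ℚ) - 2 * j - 2) * ((n : ℚ) - 2 * j - 3) / (((n : ℚ) + 2 * j) * ((n : ℚ) + 2 * j + 1))

def wzCertificate (n j k : ℕ) : ℚ :=
  (k : ℚ) * (2 * k - 4 * j - 5) / ((j + 1) * (2 * j + 3)) * summand n (j + 1) k

lemma summand_succ (n j k : ℕ) :
    summand n j (k + 1) = summand n j k *
      (2 * (1 - n + k) * (2 * j + 1 - 2 * k) * (j - k) /
        ((n + 2 * j - 1 - 2 * k) * (n + 2 * j - 2 - 2 * k) * (k + 1))) := by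
  rw [summand, hypergeomTerm_succ, ← summand]
  congr 1
  convert mul_div_mul_left _ _ (by norm_num : (4 : ℚ)⁻¹ ≠ 0) using 2 <;> ring

lemma summand_eq_summand_succ_mul {n : ℕ} (hn : 0 < n) (j k : ℕ) :
    summand n j k = summand n (j + 1) k *
      ((2 * j + 3 - 2 * k) * (j + 1 - k) * (n + 2 * j + 1) * (n + 2 * j) /
        ((2 * j + 3) * (j + 1) * (n + 2 * j + 1 - 2 * k) * (n + 2 * j - 2 * k))) := by
  have hn' : (1 : ℚ) ≤ n := by exact_mod_cast hn
  have hj : (0 : ℚ) ≤ j := j.cast_nonneg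
  convert hypergeomTerm_add_one (-(n : ℚ) + 1) k (a₂ := -(j : ℚ) - 3 / 2) (a₃ := -(j : ℚ) - 1)
    (b₁ := (1 - n) / 2 - j - 1) (b₂ := -(j : ℚ) - n / 2) (by linarith) (by linarith)
    (by linarith) (by linarith) using 2
  · simp only [summand]; congr 1 <;> ring
  · simp only [summand]; push_cast; congr 1 <;> ring
  · convert mul_div_mul_left _ _ (by norm_num : (8 : ℚ) ≠ 0) using 2 <;> ring

lemma summand_sub_eq_wzCertificate {n j k : ℕ} (hn : 2 * j + 5 ≤ n) (hk : k ≤ j + 1) :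
    summand n (j + 1) k - stepRatio n j * summand n j k =
      wzCertificate n j (k + 1) - wzCertificate n j k := by
  have hn' : (2 * j + 5 : ℚ) ≤ n := by exact_mod_cast hn
  have hk' : (k : ℚ) ≤ j + 1 := by exact_mod_cast hk
  rw [wzCertificate, wzCertificate, summand_succ, summand_eq_summand_succ_mul (by omega) j k,
    stepRatio]
  push_cast
  generalize summand n (j + 1) k = t
  have h₁ : (n : ℚ) + 2 * j + 1 - 2 * k ≠ 0 := by intro h; linarith
  have h₂ : (n : ℚ) + 2 * j - 2 * k ≠ 0 := by intro h; linarith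
  have h₁' : (n : ℚ) + 2 * (j + 1) - 1 - 2 * k ≠ 0 := by intro h; linarith
  have h₂' : (n : ℚ) + 2 * (j + 1) - 2 - 2 * k ≠ 0 := by intro h; linarith
  have h₃ : (n : ℚ) + 2 * j ≠ 0 := by intro h; linarith
  have h₄ : (n : ℚ) + 2 * j + 1 ≠ 0 := by positivity
  field_simp
  ring

lemma sum_summand_succ {n j : ℕ} (hn : 2 * j + 5 ≤ n) :
    ∑ k ∈ range (j + 2), summand n (j + 1) k =
      stepRatio n j * ∑ k ∈ range (j + 1), summand n j k := by
  have hlast : summand n j (j + 1) = 0 := hypergeomTerm_neg_natCast_of_lt _ _ _ _ _ (lt_add_one j)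
  have htop : wzCertificate n j (j + 2) = 0 := by
    rw [wzCertificate, summand,
      hypergeomTerm_neg_natCast_of_lt _ _ _ _ _ (by omega : j + 1 < j + 2), mul_zero]
  have htelescope :
      ∑ k ∈ range (j + 2), (summand n (j + 1) k - stepRatio n j * summand n j k) = 0 := by
    rw [sum_congr rfl fun k hk => summand_sub_eq_wzCertificate hn (mem_range_succ_iff.mp hk),
      sum_range_sub, htop]
    simp [wzCertificate]
  rwa [sum_sub_distrib, ← mul_sum, sum_range_succ (summand n j) (j + 1), hlast, add_zero,
    sub_eq_zero] at htelescope

def closedForm (n j : ℕ) : ℚ :=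
  -(poch (1 - (n : ℚ)) (2 * j + 1) / poch ((n : ℚ) - 1) (2 * j + 1))

lemma closedForm_succ (n j : ℕ) : closedForm n (j + 1) = stepRatio n j * closedForm n j := by
  have hnum : poch (1 - n) (2 * (j + 1) + 1) =
      poch (1 - n) (2 * j + 1) * (1 - n + (2 * j + 1 : ℕ)) * (1 - n + (2 * j + 2 : ℕ)) := rfl
  have hden : poch (n - 1) (2 * (j + 1) + 1) =
      poch (n - 1) (2 * j + 1) * (n - 1 + (2 * j + 1 : ℕ)) * (n - 1 + (2 * j + 2 : ℕ)) := rfl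
  rw [closedForm, closedForm, stepRatio, hnum, hden]
  push_cast
  simp only [div_eq_mul_inv, mul_inv]
  ring

lemma sum_summand_eq_closedForm {n j : ℕ} (hn : 2 * j + 3 ≤ n) :
    ∑ k ∈ range (j + 1), summand n j k = closedForm n j := by
  induction j with
  | zero =>
    have hn' : (n : ℚ) - 1 ≠ 0 := by
      rw [sub_ne_zero]; exact_mod_cast (by omega : n ≠ 1)
    simp only [zero_add, sum_range_one, summand, hypergeomTerm, closedForm, poch,
      factorial_zero, cast_zero, cast_one, add_zero, one_mul, mul_one, div_one]
    rw [← neg_sub, neg_div, div_self hn', neg_neg]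
  | succ j ih => rw [sum_summand_succ (by omega), ih (by omega), closedForm_succ]

lemma choose_mul_descFactorial_div_ascFactorial {m : ℕ} (hm : 0 < m) (r : ℕ) :
    ((m + r - 1).choose r : ℚ) * (m.descFactorial r / m.ascFactorial r) = m.choose r := by
  have hchoose : ((m + r - 1).choose r : ℚ) ≠ 0 := by
    exact_mod_cast (Nat.choose_pos (by omega)).ne'
  rw [← add_descFactorial_eq_ascFactorial', descFactorial_eq_factorial_mul_choose,
    descFactorial_eq_factorial_mul_choose]
  push_cast
  field_simp

lemma closedForm_eq_descFactorial_div_ascFactorial {n : ℕ} (hn : 0 < n) (j : ℕ) :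
    closedForm n j = (n - 1).descFactorial (2 * j + 1) / (n - 1).ascFactorial (2 * j + 1) := by
  have hcast : ((n - 1 : ℕ) : ℚ) = n - 1 := by rw [cast_sub hn, cast_one]
  rw [closedForm, show 1 - (n : ℚ) = -((n - 1 : ℕ) : ℚ) by rw [hcast]; ring, ← hcast,
    poch_neg_natCast, poch_natCast, (odd_two_mul_add_one j).neg_one_pow]
  ring

lemma choose_mul_closedForm {n : ℕ} (hn : 2 ≤ n) (j : ℕ) :
    ((n + 2 * j - 1).choose (2 * j + 1) : ℚ) * closedForm n j = (n - 1).choose (2 * j + 1) := by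
  rw [closedForm_eq_descFactorial_div_ascFactorial (by omega),
    ← choose_mul_descFactorial_div_ascFactorial (by omega : 0 < n - 1),
    show n - 1 + (2 * j + 1) - 1 = n + 2 * j - 1 by omega]

theorem dimension_odd_almost_full_general (n j : ℕ) (h3 : n ≥ 2 * j + 3) :
    (∑ k ∈ Finset.range (j + 1),
          poch (-(n : ℚ) + 1) k * poch (-(j : ℚ) - 1 / 2) k * poch (-(j : ℚ)) k
            / (poch ((-(n : ℚ) + 1) / 2 - (j : ℚ)) k * poch (1 - (j : ℚ) - (n : ℚ) / 2) k
                * (Nat.factorial k : ℚ))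
        = -(poch (1 - (n : ℚ)) (2 * j + 1) / poch ((n : ℚ) - 1) (2 * j + 1)))
    ∧ (Nat.choose (n + 2 * j - 1) (2 * j + 1) : ℚ)
          * (-(poch (1 - (n : ℚ)) (2 * j + 1) / poch ((n : ℚ) - 1) (2 * j + 1)))
        = (Nat.choose (n - 1) (2 * j + 1) : ℚ) :=
  ⟨sum_summand_eq_closedForm h3, choose_mul_closedForm (by omega) j⟩

/-- Odd case of Theorem 2(2): I_{2j+1,n}(n−1) = C(n−1, 2j+1). -/
theorem dimension_odd_almost_full (n j : ℕ) (hn : 2 ≤ n) (h2 : 2 * j + 1 ≤ n - 1)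
    (h3 : n ≥ 2 * j + 3) :
    (∑ k ∈ Finset.range (j + 1),
          poch (-(n : ℚ) + 1) k * poch (-(j : ℚ) - 1 / 2) k * poch (-(j : ℚ)) k
            / (poch ((-(n : ℚ) + 1) / 2 - (j : ℚ)) k * poch (1 - (j : ℚ) - (n : ℚ) / 2) k
                * (Nat.factorial k : ℚ))
        = -(poch (1 - (n : ℚ)) (2 * j + 1) / poch ((n : ℚ) - 1) (2 * j + 1)))
    ∧ (Nat.choose (n + 2 * j - 1) (2 * j + 1) : ℚ)
          * (-(poch (1 - (n : ℚ)) (2 * j + 1) / poch ((n : ℚ) - 1) (2 * j + 1)))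
        = (Nat.choose (n - 1) (2 * j + 1) : ℚ) :=
  dimension_odd_almost_full_general n j h3
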